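/- arXiv:2506.03936 — 5 statements merged into one kernel-verified Lean document; each statement's English description precedes it below -/
import Mathlib

section
/- Let V be a finite-dimensional real vector space, let v ∈ V be nonzero, and let γ be a symmetric positive semidefinite bilinear form on V whose radical {w ∈ V : γ(w,x) = 0 for all x ∈ V} equals the span of v. Then there exist a linear functional τ ∈ V* and a symmetric positive semidefinite bilinear form h on V* such that: τ(v) = 1; the radical of h equals the span of τ (in particular h(τ,ξ) = 0 for all ξ ∈ V*); and h♯(γ♭(w)) = w − τ(w)·v for all w ∈ V, where γ♭ : V → V* is w ↦ γ(w,·) and h♯ : V* → V is the linear map determined by ξ(h♯(η)) = h(η,ξ) for all ξ, η ∈ V*. -/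
/-!
Choose `τ` with `τ v = 1`. As `ker τ` is a complement of the radical `span {v}`, `γ` is
nondegenerate on `ker τ`, so every `η ∈ V*` agrees on `ker τ` with `γ η♯` for a unique
`η♯ ∈ ker τ`. Then `h ξ η := γ ξ♯ η♯ = ξ η♯` is symmetric and positive semidefinite, its radical
is the kernel of `♯`, namely the annihilator `span {τ}` of `ker τ`, and `(γ w)♯ = w - τ w • v`
since both sides lie in `ker τ` and pair with it in the same way, `v` being in the radical.
-/

open LinearMap (ker)
open Module (Dual)

namespace Module.Dual

variable {K V : Type*} [Field K] [AddCommGroup V] [Module K V]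

lemma dualAnnihilator_ker (τ : Dual K V) : (ker τ).dualAnnihilator = K ∙ τ := by
  refine le_antisymm (fun ξ hξ ↦ ?_) ((Submodule.span_singleton_le_iff_mem _ _).2 ?_)
  · have hle : ⨅ _ : Unit, ker τ ≤ ker ξ := by
      simpa [SetLike.le_def] using (Submodule.mem_dualAnnihilator ξ).1 hξ
    simpa using mem_span_of_iInf_ker_le_ker hle
  · exact (Submodule.mem_dualAnnihilator τ).2 fun _ ↦ id

lemma isCompl_ker_span_singleton {τ : Dual K V} {v : V} (hτv : τ v ≠ 0) :
    IsCompl (ker τ) (K ∙ v) :=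
  ⟨Submodule.disjoint_span_singleton.2 fun hv ↦ absurd hv hτv,
    codisjoint_iff.2 (sup_comm (K ∙ v) _ ▸ LinearMap.span_singleton_sup_ker_eq_top τ hτv)⟩

end Module.Dual

namespace LinearMap.BilinForm

variable {K V : Type*} [Field K] [AddCommGroup V] [Module K V]
  {B : LinearMap.BilinForm K V} {W : Submodule K V} {v : V} {τ : Dual K V}

lemma nondegenerate_restrict_ker (hB : B.IsSymm) (hker : ker B = K ∙ v) (hτv : τ v ≠ 0) :
    (B.restrict (ker τ)).Nondegenerate :=
  (isSymm_iff.1 hB).nondegenerate_restrict_of_isCompl_ker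
    (hker ▸ Module.Dual.isCompl_ker_span_singleton hτv)

section FiniteDimensional

variable [FiniteDimensional K V]

noncomputable def sharp (B : LinearMap.BilinForm K V) (W : Submodule K V)
    (hW : (B.restrict W).Nondegenerate) : Dual K V →ₗ[K] V :=
  W.subtype ∘ₗ ((B.restrict W).toDual hW).symm.toLinearMap ∘ₗ W.subtype.dualMap

variable (hW : (B.restrict W).Nondegenerate)

lemma sharp_mem (η : Dual K V) : B.sharp W hW η ∈ W :=
  Submodule.coe_mem _

lemma apply_sharp (η : Dual K V) {x : V} (hx : x ∈ W) : B (B.sharp W hW η) x = η x :=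
  apply_toDual_symm_apply (hB := hW) _ ⟨x, hx⟩

lemma sharp_eq_of_forall {η : Dual K V} {w : V} (hw : w ∈ W) (h : ∀ x ∈ W, B w x = η x) :
    B.sharp W hW η = w := by
  have : (B.restrict W).toDual hW ⟨w, hw⟩ = W.subtype.dualMap η := by
    ext x
    exact h x x.2
  simp [sharp, ← this]

lemma ker_sharp : ker (B.sharp W hW) = W.dualAnnihilator := by
  rw [sharp, LinearMap.ker_comp_of_ker_eq_bot _ W.ker_subtype, LinearEquiv.ker_comp,
    LinearMap.ker_dualMap_eq_dualAnnihilator_range, Submodule.range_subtype]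

noncomputable def dualForm (B : LinearMap.BilinForm K V) (W : Submodule K V)
    (hW : (B.restrict W).Nondegenerate) : LinearMap.BilinForm K (Dual K V) :=
  B.compl₁₂ (B.sharp W hW) (B.sharp W hW)

lemma dualForm_apply (ξ η : Dual K V) : B.dualForm W hW ξ η = ξ (B.sharp W hW η) :=
  apply_sharp hW ξ (sharp_mem hW η)

variable {hW} in
lemma IsSymm.dualForm (hB : B.IsSymm) : (B.dualForm W hW).IsSymm :=
  ⟨fun ξ η ↦ hB.eq (B.sharp W hW ξ) (B.sharp W hW η)⟩

variable {hW} in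
lemma IsNonneg.dualForm [LE K] (hB : B.IsNonneg) : (B.dualForm W hW).IsNonneg :=
  ⟨fun ξ ↦ hB.nonneg (B.sharp W hW ξ)⟩

lemma ker_dualForm (hB : B.IsSymm) : ker (B.dualForm W hW) = W.dualAnnihilator := by
  ext ξ
  rw [← ker_sharp hW, LinearMap.mem_ker, LinearMap.mem_ker, LinearMap.ext_iff,
    ← Module.forall_dual_apply_eq_zero_iff K]
  simp only [LinearMap.zero_apply, hB.dualForm.eq ξ, dualForm_apply]

lemma sharp_apply_eq_sub_smul (hv : v ∈ ker B) (hτv : τ v = 1)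
    (hW : (B.restrict (ker τ)).Nondegenerate) (w : V) :
    B.sharp (ker τ) hW (B w) = w - τ w • v :=
  sharp_eq_of_forall hW (by simp [hτv]) fun x _ ↦ by simp [LinearMap.mem_ker.1 hv]

end FiniteDimensional

end LinearMap.BilinForm

open LinearMap.BilinForm in
/-- Given a Carrollian structure `(v, γ)` on a finite-dimensional real vector space `V`
(`v ≠ 0`, `γ` symmetric positive semidefinite with radical `span {v}`), there exists a
dual Galilean structure `(τ, h)`: `τ v = 1`, `h` symmetric positive semidefinite on `V*`
with radical `span {τ}`, and `h♯ ∘ γ♭ = id − τ(·) • v`, where `γ♭ w = γ w` and `h♯` is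
the linear map determined by `ξ (h♯ η) = h η ξ`. -/
theorem carrollian_has_dual_galilean
    (V : Type*) [AddCommGroup V] [Module ℝ V] [FiniteDimensional ℝ V]
    (v : V) (hv : v ≠ 0)
    (γ : V →ₗ[ℝ] V →ₗ[ℝ] ℝ)
    (hγsym : ∀ w x : V, γ w x = γ x w)
    (hγpsd : ∀ w : V, 0 ≤ γ w w)
    (hγrad : {w : V | ∀ x : V, γ w x = 0} = (Submodule.span ℝ {v} : Submodule ℝ V)) :
    ∃ (τ : Module.Dual ℝ V)
      (h : Module.Dual ℝ V →ₗ[ℝ] Module.Dual ℝ V →ₗ[ℝ] ℝ),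
      τ v = 1 ∧
      (∀ ξ η : Module.Dual ℝ V, h ξ η = h η ξ) ∧
      (∀ ξ : Module.Dual ℝ V, 0 ≤ h ξ ξ) ∧
      ({ξ : Module.Dual ℝ V | ∀ η : Module.Dual ℝ V, h ξ η = 0}
        = (Submodule.span ℝ {τ} : Submodule ℝ (Module.Dual ℝ V))) ∧
      ∃ hsharp : Module.Dual ℝ V →ₗ[ℝ] V,
        (∀ ξ η : Module.Dual ℝ V, ξ (hsharp η) = h η ξ) ∧
        (∀ w : V, hsharp (γ w) = w - τ w • v) := by
  have hγ : IsSymm γ := ⟨hγsym⟩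
  have hker : ker γ = ℝ ∙ v := SetLike.coe_injective <| by
    rw [← hγrad]
    ext w
    simp [LinearMap.ext_iff]
  obtain ⟨τ, hτv⟩ := Module.Projective.exists_dual_eq_one ℝ hv
  have hW := nondegenerate_restrict_ker hγ hker (hτv ▸ one_ne_zero)
  have hvker : v ∈ ker γ := hker ▸ Submodule.mem_span_singleton_self v
  refine ⟨τ, dualForm γ _ hW, hτv, hγ.dualForm.eq, (IsNonneg.dualForm ⟨hγpsd⟩).nonneg, ?_,
    sharp γ _ hW, fun ξ η ↦ ?_, sharp_apply_eq_sub_smul hvker hτv hW⟩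
  · rw [← Module.Dual.dualAnnihilator_ker, ← ker_dualForm hW hγ]
    ext ξ
    simp [LinearMap.ext_iff]
  · rw [hγ.dualForm.eq, dualForm_apply]
end

section
/- Let V be a finite-dimensional real vector space, let τ ∈ V* be nonzero, and let h be a symmetric positive semidefinite bilinear form on V* whose radical {ξ ∈ V* : h(ξ,η) = 0 for all η ∈ V*} equals the span of τ. Then there exist a vector v ∈ V and a symmetric positive semidefinite bilinear form γ on V such that: τ(v) = 1; the radical of γ equals the span of v (in particular γ(v,w) = 0 for all w ∈ V); and h♯(γ♭(w)) = w − τ(w)·v for all w ∈ V, where γ♭ : V → V* is w ↦ γ(w,·) and h♯ : V* → V is the linear map determined by ξ(h♯(η)) = h(η,ξ) for all ξ, η ∈ V*. -/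
set_option maxHeartbeats 1000000 in
/-- Given a Galilean structure `(τ, h)` on a finite-dimensional real vector space `V`
(`τ ≠ 0` in `V*`, `h` symmetric positive semidefinite on `V*` with radical `span {τ}`),
there exists a dual Carrollian structure `(v, γ)`: `τ v = 1`, `γ` symmetric positive
semidefinite on `V` with radical `span {v}`, and `h♯ ∘ γ♭ = id − τ(·) • v`, where
`γ♭ w = γ w` and `h♯` is the linear map determined by `ξ (h♯ η) = h η ξ`. -/
theorem galilean_has_dual_carrollian
    (V : Type*) [AddCommGroup V] [Module ℝ V] [FiniteDimensional ℝ V]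
    (τ : Module.Dual ℝ V) (hτ : τ ≠ 0)
    (h : Module.Dual ℝ V →ₗ[ℝ] Module.Dual ℝ V →ₗ[ℝ] ℝ)
    (hhsym : ∀ ξ η : Module.Dual ℝ V, h ξ η = h η ξ)
    (hhpsd : ∀ ξ : Module.Dual ℝ V, 0 ≤ h ξ ξ)
    (hhrad : {ξ : Module.Dual ℝ V | ∀ η : Module.Dual ℝ V, h ξ η = 0}
      = (Submodule.span ℝ {τ} : Submodule ℝ (Module.Dual ℝ V))) :
    ∃ (v : V) (γ : V →ₗ[ℝ] V →ₗ[ℝ] ℝ),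
      τ v = 1 ∧
      (∀ w x : V, γ w x = γ x w) ∧
      (∀ w : V, 0 ≤ γ w w) ∧
      ({w : V | ∀ x : V, γ w x = 0} = (Submodule.span ℝ {v} : Submodule ℝ V)) ∧
      ∃ hsharp : Module.Dual ℝ V →ₗ[ℝ] V,
        (∀ ξ η : Module.Dual ℝ V, ξ (hsharp η) = h η ξ) ∧
        (∀ w : V, hsharp (γ w) = w - τ w • v) := by
  classical
  -- the sharp map
  set hs : Module.Dual ℝ V →ₗ[ℝ] V :=
    ((Module.evalEquiv ℝ V).symm : Module.Dual ℝ (Module.Dual ℝ V) →ₗ[ℝ] V) ∘ₗ h with hs_def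
  have hs_key : ∀ ξ η : Module.Dual ℝ V, ξ (hs η) = h η ξ := by
    intro ξ η
    have h1 : Module.evalEquiv ℝ V (hs η) = h η := by
      simp [hs_def]
    have h2 := congrArg (fun f => f ξ) h1
    simpa [Module.evalEquiv_apply, Module.Dual.eval_apply] using h2
  have hτrad : ∀ η : Module.Dual ℝ V, h τ η = 0 := by
    have : τ ∈ {ξ : Module.Dual ℝ V | ∀ η, h ξ η = 0} := by
      rw [hhrad]
      exact Submodule.mem_span_singleton_self τ
    exact this
  have hker : LinearMap.ker hs = Submodule.span ℝ {τ} := by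
    ext η
    have : hs η = 0 ↔ h η = 0 := by
      constructor
      · intro h0
        have : ((Module.evalEquiv ℝ V).symm : Module.Dual ℝ (Module.Dual ℝ V) →ₗ[ℝ] V)
            (h η) = 0 := h0
        simpa using (LinearEquiv.map_eq_zero_iff (Module.evalEquiv ℝ V).symm).mp this
      · intro h0; simp [hs_def, h0]
    rw [LinearMap.mem_ker, this]
    constructor
    · intro h0
      have : η ∈ {ξ : Module.Dual ℝ V | ∀ η', h ξ η' = 0} := by
        intro η'
        simpa using congrArg (fun f => f η') h0
      rwa [hhrad] at this
    · intro hmem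
      ext η'
      have : η ∈ {ξ : Module.Dual ℝ V | ∀ η', h ξ η' = 0} := by rw [hhrad]; exact hmem
      simpa [hhsym η η'] using this η'
  have hrange_le : LinearMap.range hs ≤ LinearMap.ker τ := by
    rintro _ ⟨η, rfl⟩
    rw [LinearMap.mem_ker, hs_key, hhsym, hτrad]
  -- finrank bookkeeping
  have hτtop : LinearMap.range τ = ⊤ := by
    obtain ⟨x, hx⟩ : ∃ x : V, τ x ≠ 0 := by
      by_contra hcon
      push_neg at hcon
      exact hτ (LinearMap.ext fun x => hcon x)
    rw [LinearMap.range_eq_top]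
    intro c
    exact ⟨(c * (τ x)⁻¹) • x, by rw [map_smul, smul_eq_mul, mul_assoc,
      inv_mul_cancel₀ hx, mul_one]⟩
  have hkerτ : Module.finrank ℝ (LinearMap.ker τ) + 1 = Module.finrank ℝ V := by
    have := LinearMap.finrank_range_add_finrank_ker τ
    rw [hτtop] at this
    simpa [add_comm] using this
  have hspanτ : Module.finrank ℝ (Submodule.span ℝ {τ} :
      Submodule ℝ (Module.Dual ℝ V)) = 1 := finrank_span_singleton hτ
  have hrangehs : Module.finrank ℝ (LinearMap.range hs) + 1
      = Module.finrank ℝ V := by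
    have := LinearMap.finrank_range_add_finrank_ker hs
    rw [hker, hspanτ, Subspace.dual_finrank_eq] at this
    exact this
  have hrange_eq : LinearMap.range hs = LinearMap.ker τ := by
    apply Submodule.eq_of_le_of_finrank_le hrange_le
    omega
  -- complement of span τ
  obtain ⟨U, hU⟩ := Submodule.exists_isCompl (Submodule.span ℝ {τ} :
    Submodule ℝ (Module.Dual ℝ V))
  set f : U →ₗ[ℝ] V := hs ∘ₗ U.subtype with f_def
  have hf_inj : Function.Injective f := by
    intro a b hab
    have hsub : f (a - b) = 0 := by
      have := map_sub f a b
      rw [this, hab, sub_self]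
    have hx' : ((a - b : U) : Module.Dual ℝ V) ∈ LinearMap.ker hs := hsub
    rw [hker] at hx'
    have : ((a - b : U) : Module.Dual ℝ V) ∈ (Submodule.span ℝ {τ} ⊓ U :
        Submodule ℝ (Module.Dual ℝ V)) := ⟨hx', (a - b).2⟩
    rw [hU.inf_eq_bot] at this
    have hd : (a - b : U) = 0 := Subtype.ext (by simpa using this)
    exact sub_eq_zero.mp hd
  have hf_range : LinearMap.range f = LinearMap.ker τ := by
    have h1 : LinearMap.range f = Submodule.map hs U := by
      rw [f_def, LinearMap.range_comp, Submodule.range_subtype]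
    have h2 : Submodule.map hs (Submodule.span ℝ {τ}) = ⊥ := by
      rw [eq_bot_iff]
      rintro y ⟨x, hx, rfl⟩
      have hx' : x ∈ LinearMap.ker hs := by rw [hker]; exact hx
      simpa [Submodule.mem_bot] using hx'
    have h3 : LinearMap.range hs = Submodule.map hs ⊤ := (Submodule.map_top hs).symm
    rw [h1, ← hrange_eq, h3, ← hU.sup_eq_top, Submodule.map_sup, h2, bot_sup_eq]
  set fc : U →ₗ[ℝ] LinearMap.ker τ :=
    f.codRestrict (LinearMap.ker τ) (fun x => hf_range ▸ LinearMap.mem_range_self f x)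
    with fc_def
  have hfc_bij : Function.Bijective fc := by
    constructor
    · intro a b hab
      apply hf_inj
      have := congrArg (Subtype.val) hab
      simpa [fc_def] using this
    · rintro ⟨y, hy⟩
      rw [← hf_range] at hy
      rcases hy with ⟨x, hx⟩
      exact ⟨x, Subtype.ext (by simpa [fc_def] using hx)⟩
  set e : U ≃ₗ[ℝ] LinearMap.ker τ := LinearEquiv.ofBijective fc hfc_bij with e_def
  have he_apply : ∀ x : U, ((e x : V)) = hs x := fun x => rfl
  -- choose v
  have hv_ex : ∃ w : V, w ∈ U.dualCoannihilator ∧ τ w ≠ 0 := by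
    by_contra hcon
    push_neg at hcon
    have hτU : τ ∈ U := by
      have : τ ∈ U.dualCoannihilator.dualAnnihilator := by
        rw [Submodule.mem_dualAnnihilator]
        intro w hw
        exact hcon w hw
      rwa [Subspace.dualCoannihilator_dualAnnihilator_eq] at this
    have : τ ∈ (Submodule.span ℝ {τ} ⊓ U : Submodule ℝ (Module.Dual ℝ V)) :=
      ⟨Submodule.mem_span_singleton_self τ, hτU⟩
    rw [hU.inf_eq_bot] at this
    exact hτ (by simpa using this)
  obtain ⟨w₀, hw₀C, hw₀⟩ := hv_ex
  set v : V := (τ w₀)⁻¹ • w₀ with v_def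
  have hτv : τ v = 1 := by
    rw [v_def, map_smul, smul_eq_mul, inv_mul_cancel₀ hw₀]
  have hvC : v ∈ U.dualCoannihilator := Submodule.smul_mem _ _ hw₀C
  have hvU : ∀ ξ ∈ U, ξ v = 0 := by
    intro ξ hξ
    exact (Submodule.mem_dualCoannihilator v).mp hvC ξ hξ
  -- the projection P
  set P : V →ₗ[ℝ] V := LinearMap.id - τ.smulRight v with P_def
  have hP_apply : ∀ x : V, P x = x - τ x • v := fun x => rfl
  have hPker : ∀ x : V, P x ∈ LinearMap.ker τ := by
    intro x
    rw [LinearMap.mem_ker, hP_apply, map_sub, map_smul, hτv, smul_eq_mul, mul_one, sub_self]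
  set Pc : V →ₗ[ℝ] LinearMap.ker τ := P.codRestrict (LinearMap.ker τ) hPker with Pc_def
  have hPc_apply : ∀ x : V, ((Pc x : V)) = x - τ x • v := fun x => rfl
  set γb : V →ₗ[ℝ] Module.Dual ℝ V :=
    U.subtype ∘ₗ (e.symm : LinearMap.ker τ →ₗ[ℝ] U) ∘ₗ Pc with γb_def
  have hγb_apply : ∀ x : V,
      γb x = U.subtype ((e.symm : LinearMap.ker τ →ₗ[ℝ] U) (Pc x)) := by
    intro x
    rw [γb_def]
    simp only [LinearMap.coe_comp, Function.comp_apply]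
  have hγbU : ∀ x : V, γb x ∈ U := fun x => (e.symm (Pc x)).2
  have key1 : ∀ x : V, hs (γb x) = x - τ x • v := by
    intro x
    have : hs (γb x) = ((e (e.symm (Pc x)) : LinearMap.ker τ) : V) := by
      rw [γb_def]
      exact (he_apply (e.symm (Pc x))).symm
    rw [this, LinearEquiv.apply_symm_apply]
    exact hPc_apply x
  have key2 : ∀ x : V, (γb x) v = 0 := fun x => hvU _ (hγbU x)
  have keyh : ∀ x y : V, (γb x) y = h (γb y) (γb x) := by
    intro x y
    have hy : y = (y - τ y • v) + τ y • v := by abel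
    calc (γb x) y = (γb x) ((y - τ y • v) + τ y • v) := by rw [← hy]
      _ = (γb x) (y - τ y • v) + τ y • (γb x) v := by
          rw [map_add, map_smul]
      _ = (γb x) (hs (γb y)) := by rw [key2, key1]; simp
      _ = h (γb y) (γb x) := hs_key _ _
  refine ⟨v, γb, hτv, ?_, ?_, ?_, hs, hs_key, key1⟩
  · intro x y
    rw [keyh x y, keyh y x, hhsym]
  · intro x
    rw [keyh x x]
    exact hhpsd _
  · ext x
    simp only [Set.mem_setOf_eq, SetLike.mem_coe]
    constructor
    · intro hx
      have hγb0 : γb x = 0 := by ext y; exact hx y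
      have hsub : U.subtype ((e.symm : LinearMap.ker τ →ₗ[ℝ] U) (Pc x)) = 0 := by
        rw [← hγb_apply x]
        exact hγb0
      have hU0 : ((e.symm : LinearMap.ker τ →ₗ[ℝ] U) (Pc x)) = 0 := by
        apply Subtype.ext
        simpa using hsub
      have hPc0 : Pc x = 0 := by
        apply e.symm.injective
        rw [map_zero]
        exact hU0
      have : x - τ x • v = 0 := by
        have := congrArg (Subtype.val) hPc0
        simpa [hPc_apply] using this
      have hx' : x = τ x • v := by
        rwa [sub_eq_zero] at this
      rw [Submodule.mem_span_singleton]
      exact ⟨τ x, hx'.symm⟩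
    · intro hx
      rw [Submodule.mem_span_singleton] at hx
      obtain ⟨c, rfl⟩ := hx
      intro y
      have hPcv : Pc (c • v) = 0 := by
        apply Subtype.ext
        rw [hPc_apply]
        rw [map_smul, hτv, smul_eq_mul, mul_one, sub_self]
        rfl
      rw [hγb_apply, hPcv, map_zero, map_zero, LinearMap.zero_apply]
end

section
/- (Decomposition of a general affine connection with respect to a Carrollian structure.) Assume the duality relations hold on U. Then for every affine connection Γ, at every point of U and for all indices α, μ, ν: Γ^α_{μν} − ^{v,τ}Γ^α_{μν} = h^{ασ}( −(1/2)(∇_μ γ_{νσ} + ∇_ν γ_{μσ}) + (1/2) ∇_σ γ_{μν} ) − (1/2)(γ_{σμ} T^σ_{νκ} + γ_{σν} T^σ_{μκ}) h^{κα} + (1/2) T^α_{μν} − (1/2) v^α (∇_μ τ_ν + ∇_ν τ_μ). -/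
/-! Common setup: fields on an open subset `U` of `ℝ⁴`, coordinates indexed by `Fin 4`,
partial derivatives `pd`, covariant derivatives, torsion, the intrinsic objects
`ω`, `Θ`, the compatible connection `^{v,τ}Γ` and the Coriolis field. -/

abbrev Vec4 : Type := Fin 4 → ℝ
abbrev Tens1 : Type := Vec4 → Fin 4 → ℝ
abbrev Tens2 : Type := Vec4 → Fin 4 → Fin 4 → ℝ
abbrev Tens3 : Type := Vec4 → Fin 4 → Fin 4 → Fin 4 → ℝ

/-- μ-th partial derivative -/
noncomputable def pd (μ : Fin 4) (f : Vec4 → ℝ) (x : Vec4) : ℝ :=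
  fderiv ℝ f x (Pi.single μ 1)

/-- ∇_μ τ_ν := ∂_μ τ_ν − Γ^σ_{μν} τ_σ -/
noncomputable def covOne (Γ : Tens3) (τ : Tens1) (x : Vec4) (μ ν : Fin 4) : ℝ :=
  pd μ (fun y => τ y ν) x - ∑ σ, Γ x σ μ ν * τ x σ

/-- ∇_μ v^ν := ∂_μ v^ν + Γ^ν_{μσ} v^σ -/
noncomputable def covVec (Γ : Tens3) (v : Tens1) (x : Vec4) (μ ν : Fin 4) : ℝ :=
  pd μ (fun y => v y ν) x + ∑ σ, Γ x ν μ σ * v x σ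

/-- ∇_α γ_{μν} := ∂_α γ_{μν} − Γ^σ_{αμ} γ_{σν} − Γ^σ_{αν} γ_{μσ} -/
noncomputable def covLow (Γ : Tens3) (γ : Tens2) (x : Vec4) (α μ ν : Fin 4) : ℝ :=
  pd α (fun y => γ y μ ν) x - ∑ σ, Γ x σ α μ * γ x σ ν - ∑ σ, Γ x σ α ν * γ x μ σ

/-- ∇_α h^{μν} := ∂_α h^{μν} + Γ^μ_{ασ} h^{σν} + Γ^ν_{ασ} h^{μσ} -/
noncomputable def covUp (Γ : Tens3) (h : Tens2) (x : Vec4) (α μ ν : Fin 4) : ℝ :=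
  pd α (fun y => h y μ ν) x + ∑ σ, Γ x μ α σ * h x σ ν + ∑ σ, Γ x ν α σ * h x μ σ

/-- Torsion T^α_{μν} := Γ^α_{μν} − Γ^α_{νμ} -/
def torsion (Γ : Tens3) (x : Vec4) (α μ ν : Fin 4) : ℝ :=
  Γ x α μ ν - Γ x α ν μ

/-- ω_{μν} := (1/2)(∂_μ τ_ν − ∂_ν τ_μ) -/
noncomputable def omega2 (τ : Tens1) (x : Vec4) (μ ν : Fin 4) : ℝ :=
  (1/2) * (pd μ (fun y => τ y ν) x - pd ν (fun y => τ y μ) x)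

/-- Θ_{μν} := (1/2)(v^σ ∂_σ γ_{μν} + γ_{σν} ∂_μ v^σ + γ_{μσ} ∂_ν v^σ) -/
noncomputable def theta2 (v : Tens1) (γ : Tens2) (x : Vec4) (μ ν : Fin 4) : ℝ :=
  (1/2) * (∑ σ, v x σ * pd σ (fun y => γ y μ ν) x
    + ∑ σ, γ x σ ν * pd μ (fun y => v y σ) x
    + ∑ σ, γ x μ σ * pd ν (fun y => v y σ) x)

/-- The compatible connection ^{v,τ}Γ^α_{μν} -/
noncomputable def compatConn (v τ : Tens1) (γ h : Tens2) : Tens3 := fun x α μ ν =>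
  ∑ σ, h x α σ * ((1/2) * pd μ (fun y => γ y ν σ) x + (1/2) * pd ν (fun y => γ y μ σ) x
    - (1/2) * pd σ (fun y => γ y μ ν) x)
  + (1/2) * v x α * (pd μ (fun y => τ y ν) x + pd ν (fun y => τ y μ) x)

/-- Coriolis field κ_{μν} := (1/2)(γ_{να} ∇_μ v^α − γ_{μα} ∇_ν v^α) -/
noncomputable def coriolis (Γ : Tens3) (v : Tens1) (γ : Tens2) (x : Vec4) (μ ν : Fin 4) : ℝ :=
  (1/2) * (∑ α, γ x ν α * covVec Γ v x μ α - ∑ α, γ x μ α * covVec Γ v x ν α)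

/-- Smoothness of a rank-1 field on U -/
def Smooth1 (τ : Tens1) (U : Set Vec4) : Prop := ∀ ν, ContDiffOn ℝ (⊤ : ℕ∞) (fun x => τ x ν) U
/-- Smoothness of a rank-2 field on U -/
def Smooth2 (γ : Tens2) (U : Set Vec4) : Prop := ∀ μ ν, ContDiffOn ℝ (⊤ : ℕ∞) (fun x => γ x μ ν) U
/-- Smoothness of connection coefficients on U -/
def Smooth3 (Γ : Tens3) (U : Set Vec4) : Prop := ∀ α μ ν, ContDiffOn ℝ (⊤ : ℕ∞) (fun x => Γ x α μ ν) U

/-- Kronecker delta -/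
def kron (μ ν : Fin 4) : ℝ := if μ = ν then 1 else 0

/-- The duality relations: τ_μ v^μ = 1, h^{μν} τ_ν = 0, γ_{μν} v^ν = 0,
h^{μσ} γ_{σν} = δ^μ_ν − v^μ τ_ν, together with symmetry of γ and h. -/
def DualityOn (τ v : Tens1) (γ h : Tens2) (U : Set Vec4) : Prop :=
  ∀ x ∈ U, (∀ μ ν, γ x μ ν = γ x ν μ) ∧ (∀ μ ν, h x μ ν = h x ν μ) ∧
    (∑ μ, τ x μ * v x μ = 1) ∧
    (∀ μ, ∑ ν, h x μ ν * τ x ν = 0) ∧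
    (∀ μ, ∑ ν, γ x μ ν * v x ν = 0) ∧
    (∀ μ ν, ∑ σ, h x μ σ * γ x σ ν = kron μ ν - v x μ * τ x ν)

/-- Decomposition of a general affine connection with respect to a Carrollian structure:
`Γ^α_{μν} − ^{v,τ}Γ^α_{μν} = h^{ασ}(−∇_{(μ}γ_{ν)σ} + (1/2)∇_σ γ_{μν}) − γ_{σ(μ}T^σ_{ν)κ} h^{κα}
+ (1/2) T^α_{μν} − v^α ∇_{(μ}τ_{ν)}`, with symmetrizations written out. -/
theorem carrollian_decomposition
    (U : Set Vec4) (hU : IsOpen U) (hne : U.Nonempty)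
    (τ v : Tens1) (γ h : Tens2) (Γ : Tens3)
    (hτs : Smooth1 τ U) (hvs : Smooth1 v U) (hγs : Smooth2 γ U) (hhs : Smooth2 h U)
    (hΓs : Smooth3 Γ U)
    (hdual : DualityOn τ v γ h U) :
    ∀ x ∈ U, ∀ α μ ν,
      Γ x α μ ν - compatConn v τ γ h x α μ ν
        = ∑ σ, h x α σ * (-(1/2) * (covLow Γ γ x μ ν σ + covLow Γ γ x ν μ σ)
            + (1/2) * covLow Γ γ x σ μ ν)
          - (1/2) * ∑ κ, (∑ σ, (γ x σ μ * torsion Γ x σ ν κ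
              + γ x σ ν * torsion Γ x σ μ κ)) * h x κ α
          + (1/2) * torsion Γ x α μ ν
          - (1/2) * v x α * (covOne Γ τ x μ ν + covOne Γ τ x ν μ) := by
    intro x hx α μ ν
    obtain ⟨hγsym, hhsym, -, -, -, hE⟩ := hdual x hx
    have E' : ∀ ρ, h x α 0 * γ x 0 ρ + h x α 1 * γ x 1 ρ + h x α 2 * γ x 2 ρ
        + h x α 3 * γ x 3 ρ = kron α ρ - v x α * τ x ρ := fun ρ => by
      simpa [Fin.sum_univ_four] using hE α ρ
    have hk : (1/2) * (Γ x 0 μ ν + Γ x 0 ν μ) * kron α 0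
        + (1/2) * (Γ x 1 μ ν + Γ x 1 ν μ) * kron α 1
        + (1/2) * (Γ x 2 μ ν + Γ x 2 ν μ) * kron α 2
        + (1/2) * (Γ x 3 μ ν + Γ x 3 ν μ) * kron α 3
        = (1/2) * (Γ x α μ ν + Γ x α ν μ) := by
      fin_cases α <;> simp [kron] <;> ring
    simp only [compatConn, covLow, covOne, torsion, Fin.sum_univ_four]
    linear_combination
      ((1/2) * ((γ x 0 μ * (Γ x 0 ν 0 - Γ x 0 0 ν) + γ x 0 ν * (Γ x 0 μ 0 - Γ x 0 0 μ)) + (γ x 1 μ * (Γ x 1 ν 0 - Γ x 1 0 ν) + γ x 1 ν * (Γ x 1 μ 0 - Γ x 1 0 μ)) + (γ x 2 μ * (Γ x 2 ν 0 - Γ x 2 0 ν) + γ x 2 ν * (Γ x 2 μ 0 - Γ x 2 0 μ)) + (γ x 3 μ * (Γ x 3 ν 0 - Γ x 3 0 ν) + γ x 3 ν * (Γ x 3 μ 0 - Γ x 3 0 μ)))) * hhsym 0 α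
      + ((1/2) * ((γ x 0 μ * (Γ x 0 ν 1 - Γ x 0 1 ν) + γ x 0 ν * (Γ x 0 μ 1 - Γ x 0 1 μ)) + (γ x 1 μ * (Γ x 1 ν 1 - Γ x 1 1 ν) + γ x 1 ν * (Γ x 1 μ 1 - Γ x 1 1 μ)) + (γ x 2 μ * (Γ x 2 ν 1 - Γ x 2 1 ν) + γ x 2 ν * (Γ x 2 μ 1 - Γ x 2 1 μ)) + (γ x 3 μ * (Γ x 3 ν 1 - Γ x 3 1 ν) + γ x 3 ν * (Γ x 3 μ 1 - Γ x 3 1 μ)))) * hhsym 1 α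
      + ((1/2) * ((γ x 0 μ * (Γ x 0 ν 2 - Γ x 0 2 ν) + γ x 0 ν * (Γ x 0 μ 2 - Γ x 0 2 μ)) + (γ x 1 μ * (Γ x 1 ν 2 - Γ x 1 2 ν) + γ x 1 ν * (Γ x 1 μ 2 - Γ x 1 2 μ)) + (γ x 2 μ * (Γ x 2 ν 2 - Γ x 2 2 ν) + γ x 2 ν * (Γ x 2 μ 2 - Γ x 2 2 μ)) + (γ x 3 μ * (Γ x 3 ν 2 - Γ x 3 2 ν) + γ x 3 ν * (Γ x 3 μ 2 - Γ x 3 2 μ)))) * hhsym 2 α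
      + ((1/2) * ((γ x 0 μ * (Γ x 0 ν 3 - Γ x 0 3 ν) + γ x 0 ν * (Γ x 0 μ 3 - Γ x 0 3 μ)) + (γ x 1 μ * (Γ x 1 ν 3 - Γ x 1 3 ν) + γ x 1 ν * (Γ x 1 μ 3 - Γ x 1 3 μ)) + (γ x 2 μ * (Γ x 2 ν 3 - Γ x 2 3 ν) + γ x 2 ν * (Γ x 2 μ 3 - Γ x 2 3 μ)) + (γ x 3 μ * (Γ x 3 ν 3 - Γ x 3 3 ν) + γ x 3 ν * (Γ x 3 μ 3 - Γ x 3 3 μ)))) * hhsym 3 α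
      + (-(1/2) * h x α 0 * Γ x 0 μ 0) * hγsym ν 0
      + (-(1/2) * h x α 0 * Γ x 0 ν 0 + (1/2) * h x α 0 * Γ x 0 0 ν) * hγsym μ 0
      + (-(1/2) * h x α 0 * (Γ x 0 μ ν + Γ x 0 ν μ)) * hγsym 0 0
      + (-(1/2) * h x α 0 * Γ x 1 μ 0) * hγsym ν 1
      + (-(1/2) * h x α 0 * Γ x 1 ν 0 + (1/2) * h x α 0 * Γ x 1 0 ν) * hγsym μ 1
      + (-(1/2) * h x α 0 * (Γ x 1 μ ν + Γ x 1 ν μ)) * hγsym 1 0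
      + (-(1/2) * h x α 0 * Γ x 2 μ 0) * hγsym ν 2
      + (-(1/2) * h x α 0 * Γ x 2 ν 0 + (1/2) * h x α 0 * Γ x 2 0 ν) * hγsym μ 2
      + (-(1/2) * h x α 0 * (Γ x 2 μ ν + Γ x 2 ν μ)) * hγsym 2 0
      + (-(1/2) * h x α 0 * Γ x 3 μ 0) * hγsym ν 3
      + (-(1/2) * h x α 0 * Γ x 3 ν 0 + (1/2) * h x α 0 * Γ x 3 0 ν) * hγsym μ 3
      + (-(1/2) * h x α 0 * (Γ x 3 μ ν + Γ x 3 ν μ)) * hγsym 3 0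
      + (-(1/2) * h x α 1 * Γ x 0 μ 1) * hγsym ν 0
      + (-(1/2) * h x α 1 * Γ x 0 ν 1 + (1/2) * h x α 1 * Γ x 0 1 ν) * hγsym μ 0
      + (-(1/2) * h x α 1 * (Γ x 0 μ ν + Γ x 0 ν μ)) * hγsym 0 1
      + (-(1/2) * h x α 1 * Γ x 1 μ 1) * hγsym ν 1
      + (-(1/2) * h x α 1 * Γ x 1 ν 1 + (1/2) * h x α 1 * Γ x 1 1 ν) * hγsym μ 1
      + (-(1/2) * h x α 1 * (Γ x 1 μ ν + Γ x 1 ν μ)) * hγsym 1 1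
      + (-(1/2) * h x α 1 * Γ x 2 μ 1) * hγsym ν 2
      + (-(1/2) * h x α 1 * Γ x 2 ν 1 + (1/2) * h x α 1 * Γ x 2 1 ν) * hγsym μ 2
      + (-(1/2) * h x α 1 * (Γ x 2 μ ν + Γ x 2 ν μ)) * hγsym 2 1
      + (-(1/2) * h x α 1 * Γ x 3 μ 1) * hγsym ν 3
      + (-(1/2) * h x α 1 * Γ x 3 ν 1 + (1/2) * h x α 1 * Γ x 3 1 ν) * hγsym μ 3
      + (-(1/2) * h x α 1 * (Γ x 3 μ ν + Γ x 3 ν μ)) * hγsym 3 1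
      + (-(1/2) * h x α 2 * Γ x 0 μ 2) * hγsym ν 0
      + (-(1/2) * h x α 2 * Γ x 0 ν 2 + (1/2) * h x α 2 * Γ x 0 2 ν) * hγsym μ 0
      + (-(1/2) * h x α 2 * (Γ x 0 μ ν + Γ x 0 ν μ)) * hγsym 0 2
      + (-(1/2) * h x α 2 * Γ x 1 μ 2) * hγsym ν 1
      + (-(1/2) * h x α 2 * Γ x 1 ν 2 + (1/2) * h x α 2 * Γ x 1 2 ν) * hγsym μ 1
      + (-(1/2) * h x α 2 * (Γ x 1 μ ν + Γ x 1 ν μ)) * hγsym 1 2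
      + (-(1/2) * h x α 2 * Γ x 2 μ 2) * hγsym ν 2
      + (-(1/2) * h x α 2 * Γ x 2 ν 2 + (1/2) * h x α 2 * Γ x 2 2 ν) * hγsym μ 2
      + (-(1/2) * h x α 2 * (Γ x 2 μ ν + Γ x 2 ν μ)) * hγsym 2 2
      + (-(1/2) * h x α 2 * Γ x 3 μ 2) * hγsym ν 3
      + (-(1/2) * h x α 2 * Γ x 3 ν 2 + (1/2) * h x α 2 * Γ x 3 2 ν) * hγsym μ 3
      + (-(1/2) * h x α 2 * (Γ x 3 μ ν + Γ x 3 ν μ)) * hγsym 3 2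
      + (-(1/2) * h x α 3 * Γ x 0 μ 3) * hγsym ν 0
      + (-(1/2) * h x α 3 * Γ x 0 ν 3 + (1/2) * h x α 3 * Γ x 0 3 ν) * hγsym μ 0
      + (-(1/2) * h x α 3 * (Γ x 0 μ ν + Γ x 0 ν μ)) * hγsym 0 3
      + (-(1/2) * h x α 3 * Γ x 1 μ 3) * hγsym ν 1
      + (-(1/2) * h x α 3 * Γ x 1 ν 3 + (1/2) * h x α 3 * Γ x 1 3 ν) * hγsym μ 1
      + (-(1/2) * h x α 3 * (Γ x 1 μ ν + Γ x 1 ν μ)) * hγsym 1 3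
      + (-(1/2) * h x α 3 * Γ x 2 μ 3) * hγsym ν 2
      + (-(1/2) * h x α 3 * Γ x 2 ν 3 + (1/2) * h x α 3 * Γ x 2 3 ν) * hγsym μ 2
      + (-(1/2) * h x α 3 * (Γ x 2 μ ν + Γ x 2 ν μ)) * hγsym 2 3
      + (-(1/2) * h x α 3 * Γ x 3 μ 3) * hγsym ν 3
      + (-(1/2) * h x α 3 * Γ x 3 ν 3 + (1/2) * h x α 3 * Γ x 3 3 ν) * hγsym μ 3
      + (-(1/2) * h x α 3 * (Γ x 3 μ ν + Γ x 3 ν μ)) * hγsym 3 3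
      + (-(1/2) * (Γ x 0 μ ν + Γ x 0 ν μ)) * E' 0
      + (-(1/2) * (Γ x 1 μ ν + Γ x 1 ν μ)) * E' 1
      + (-(1/2) * (Γ x 2 μ ν + Γ x 2 ν μ)) * E' 2
      + (-(1/2) * (Γ x 3 μ ν + Γ x 3 ν μ)) * E' 3
      + (-1) * hk
end

section
/- (Decomposition of a general affine connection with respect to a Galilean structure.) Assume the duality relations hold on U. Then for every affine connection Γ, at every point of U and for all indices α, μ, ν: Γ^α_{μν} − ^{v,τ}Γ^α_{μν} = h^{αβ} γ_{βλ} · (1/2)(γ_{σν} ∇_μ h^{σλ} + γ_{σμ} ∇_ν h^{σλ}) − (1/2) h^{ακ} γ_{μσ} γ_{νλ} ∇_κ h^{σλ} − (1/2) v^α (∇_μ τ_ν + ∇_ν τ_μ) − (1/2)(γ_{σμ} T^σ_{νκ} + γ_{σν} T^σ_{μκ}) h^{κα} + (1/2) T^α_{μν} + (τ_μ κ_{νβ} + τ_ν κ_{μβ}) h^{αβ}, where κ_{μν} := (1/2)(γ_{να} ∇_μ v^α − γ_{μα} ∇_ν v^α) is the Coriolis field. -/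


lemma pd_congr {U : Set Vec4} (hU : IsOpen U) {x : Vec4} (hx : x ∈ U)
    {f g : Vec4 → ℝ} (h : ∀ y ∈ U, f y = g y) (μ : Fin 4) : pd μ f x = pd μ g x := by
  unfold pd
  rw [Filter.EventuallyEq.fderiv_eq]
  filter_upwards [hU.mem_nhds hx] with y hy using h y hy

lemma pd_const (μ : Fin 4) (c : ℝ) (x : Vec4) : pd μ (fun _ => c) x = 0 := by
  simp [pd]

lemma pd_locally_const {U : Set Vec4} (hU : IsOpen U) {x : Vec4} (hx : x ∈ U)
    {f : Vec4 → ℝ} {c : ℝ} (h : ∀ y ∈ U, f y = c) (μ : Fin 4) : pd μ f x = 0 := by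
  rw [pd_congr hU hx h μ, pd_const]

lemma pd_sum (μ : Fin 4) (f : Fin 4 → Vec4 → ℝ) (x : Vec4)
    (hf : ∀ i, DifferentiableAt ℝ (f i) x) :
    pd μ (fun y => ∑ i, f i y) x = ∑ i, pd μ (f i) x := by
  unfold pd
  rw [fderiv_fun_sum (fun i _ => hf i)]
  simp

lemma pd_mul (μ : Fin 4) (f g : Vec4 → ℝ) (x : Vec4)
    (hf : DifferentiableAt ℝ f x) (hg : DifferentiableAt ℝ g x) :
    pd μ (fun y => f y * g y) x = pd μ f x * g x + f x * pd μ g x := by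
  unfold pd
  rw [fderiv_fun_mul hf hg]
  simp only [ContinuousLinearMap.add_apply, ContinuousLinearMap.smul_apply, smul_eq_mul]
  ring

lemma pd_add (μ : Fin 4) (f g : Vec4 → ℝ) (x : Vec4)
    (hf : DifferentiableAt ℝ f x) (hg : DifferentiableAt ℝ g x) :
    pd μ (fun y => f y + g y) x = pd μ f x + pd μ g x := by
  unfold pd
  rw [fderiv_fun_add hf hg]
  simp

lemma ksum (f : Fin 4 → ℝ) (n : Fin 4) : (∑ c, f c * kron c n) = f n := by
  fin_cases n <;> simp [Fin.sum_univ_four, kron]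

lemma ksum' (f : Fin 4 → ℝ) (a : Fin 4) : (∑ c, kron a c * f c) = f a := by
  fin_cases a <;> simp [Fin.sum_univ_four, kron]

set_option maxHeartbeats 4000000 in
lemma core_decomp (G : Fin 4 → Fin 4 → Fin 4 → ℝ) (g H : Fin 4 → Fin 4 → ℝ) (t V : Fin 4 → ℝ)
    (dg dh : Fin 4 → Fin 4 → Fin 4 → ℝ) (dt dv : Fin 4 → Fin 4 → ℝ)
    (Dh : Fin 4 → Fin 4 → Fin 4 → ℝ) (Dv : Fin 4 → Fin 4 → ℝ)
    (hDh : ∀ m a b, Dh m a b = dh m a b + (∑ c, G a m c * H c b) + (∑ c, G b m c * H a c))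
    (hDv : ∀ m a, Dv m a = dv m a + ∑ c, G a m c * V c)
    (hg : ∀ a b, g a b = g b a) (hH : ∀ a b, H a b = H b a)
    (hdg : ∀ m a b, dg m a b = dg m b a) (hdh : ∀ m a b, dh m a b = dh m b a)
    (hD2 : (∑ σ, t σ * V σ) = 1)
    (hD3 : ∀ a, (∑ σ, H a σ * t σ) = 0)
    (hD4 : ∀ a, (∑ σ, g a σ * V σ) = 0)
    (hD5 : ∀ a b, (∑ σ, H a σ * g σ b) = kron a b - V a * t b)
    (hP4 : ∀ m a, (∑ σ, (dg m a σ * V σ + g a σ * dv m σ)) = 0)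
    (hP5 : ∀ m a b, (∑ σ, (dh m a σ * g σ b + H a σ * dg m σ b)) = -(dv m a * t b + V a * dt m b))
    (α μ ν : Fin 4) :
    G α μ ν - ((∑ σ, H α σ * ((1/2) * dg μ ν σ + (1/2) * dg ν μ σ - (1/2) * dg σ μ ν)) + (1/2) * V α * (dt μ ν + dt ν μ))
      = (∑ β, ∑ l, H α β * g β l * ((1/2) * ((∑ σ, g σ ν * Dh μ σ l) + (∑ σ, g σ μ * Dh ν σ l))))
        - (1/2) * ∑ k, ∑ σ, ∑ l, H α k * g μ σ * g ν l * Dh k σ l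
        - (1/2) * V α * ((dt μ ν - ∑ σ, G σ μ ν * t σ) + (dt ν μ - ∑ σ, G σ ν μ * t σ))
        - (1/2) * ∑ k, (∑ σ, (g σ μ * (G σ ν k - G σ k ν) + g σ ν * (G σ μ k - G σ k μ))) * H k α
        + (1/2) * (G α μ ν - G α ν μ)
        + ∑ β, (t μ * ((1/2) * (∑ a, g β a * Dv ν a - ∑ a, g ν a * Dv β a)) + t ν * ((1/2) * (∑ a, g β a * Dv μ a - ∑ a, g μ a * Dv β a))) * H α β := by
  have hX : ∀ m n l, (∑ σ, g σ n * Dh m σ l)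
      = G l m n - dv m l * t n - V l * dt m n - (∑ σ, H l σ * dg m σ n)
        + (∑ c, (∑ σ, g σ n * G σ m c) * H c l) - (∑ c, G l m c * V c) * t n := by
    intro m n l
    have p5 := hP5 m l n
    have d50 := hD5 0 n
    have d51 := hD5 1 n
    have d52 := hD5 2 n
    have d53 := hD5 3 n
    have kq := ksum (fun c => G l m c) n
    simp only [Fin.sum_univ_four, hDh] at p5 d50 d51 d52 d53 kq ⊢
    linear_combination p5 + kq + g 0 n * hdh m 0 l + g 1 n * hdh m 1 l + g 2 n * hdh m 2 l + g 3 n * hdh m 3 l + G l m 0 * d50 + G l m 1 * d51 + G l m 2 * d52 + G l m 3 * d53 + g 0 n * G l m 0 * hH 0 0 + g 0 n * G l m 1 * hH 0 1 + g 0 n * G l m 2 * hH 0 2 + g 0 n * G l m 3 * hH 0 3 + g 1 n * G l m 0 * hH 1 0 + g 1 n * G l m 1 * hH 1 1 + g 1 n * G l m 2 * hH 1 2 + g 1 n * G l m 3 * hH 1 3 + g 2 n * G l m 0 * hH 2 0 + g 2 n * G l m 1 * hH 2 1 + g 2 n * G l m 2 * hH 2 2 + g 2 n * G l m 3 * hH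 2 3 + g 3 n * G l m 0 * hH 3 0 + g 3 n * G l m 1 * hH 3 1 + g 3 n * G l m 2 * hH 3 2 + g 3 n * G l m 3 * hH 3 3
  have hXt : ∀ m n, (∑ l, t l * (∑ σ, g σ n * Dh m σ l))
      = (∑ σ, G σ m n * t σ) - (∑ l, t l * Dv m l) * t n - dt m n := by
    intro m n
    have e : (∑ l, t l * (∑ σ, g σ n * Dh m σ l)) = ∑ l, t l * (G l m n - dv m l * t n - V l * dt m n - (∑ σ, H l σ * dg m σ n) + (∑ c, (∑ σ, g σ n * G σ m c) * H c l) - (∑ c, G l m c * V c) * t n) :=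
      Finset.sum_congr rfl fun l _ => by rw [hX m n l]
    rw [e]
    have d2 := hD2
    have d30 := hD3 0
    have d31 := hD3 1
    have d32 := hD3 2
    have d33 := hD3 3
    simp only [Fin.sum_univ_four, hDv] at d2 d30 d31 d32 d33 ⊢
    linear_combination (-(dt m n)) * d2 - dg m 0 n * d30 - dg m 1 n * d31 - dg m 2 n * d32 - dg m 3 n * d33 - t 0 * dg m 0 n * hH 0 0 - t 0 * dg m 1 n * hH 0 1 - t 0 * dg m 2 n * hH 0 2 - t 0 * dg m 3 n * hH 0 3 - t 1 * dg m 0 n * hH 1 0 - t 1 * dg m 1 n * hH 1 1 - t 1 * dg m 2 n * hH 1 2 - t 1 * dg m 3 n * hH 1 3 - t 2 * dg m 0 n * hH 2 0 - t 2 * dg m 1 n * hH 2 1 - t 2 * dg m 2 n * hH 2 2 - t 2 * dg m 3 n * hH 2 3 - t 3 * dg m 0 n * hH 3 0 - t 3 * dg m 1 n * hH 3 1 - t 3 * dg m 2 n * hH 3 2 - t 3 * dg m 3 n * hH 3 3 + (g 0 n * G 0 m 0 + g 1 n * G 1 m 0 + g 2 n * G 2 m 0 + g 3 n * G 3 m 0)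 * d30 + (g 0 n * G 0 m 1 + g 1 n * G 1 m 1 + g 2 n * G 2 m 1 + g 3 n * G 3 m 1) * d31 + (g 0 n * G 0 m 2 + g 1 n * G 1 m 2 + g 2 n * G 2 m 2 + g 3 n * G 3 m 2) * d32 + (g 0 n * G 0 m 3 + g 1 n * G 1 m 3 + g 2 n * G 2 m 3 + g 3 n * G 3 m 3) * d33
  have hY : ∀ k, (∑ σ, ∑ l, g μ σ * g ν l * Dh k σ l)
      = (∑ σ, g σ ν * G σ k μ) + (∑ σ, g σ μ * G σ k ν) - dg k μ ν
        - (∑ a, g ν a * Dv k a) * t μ - (∑ a, g μ a * Dv k a) * t ν := by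
    intro k
    have e1 : (∑ σ, ∑ l, g μ σ * g ν l * Dh k σ l) = ∑ l, g ν l * (∑ σ, g σ μ * Dh k σ l) := by
      rw [Finset.sum_comm]
      refine Finset.sum_congr rfl fun l _ => ?_
      rw [Finset.mul_sum]
      exact Finset.sum_congr rfl fun σ _ => by rw [hg μ σ]; ring
    have e2 : (∑ l, g ν l * (∑ σ, g σ μ * Dh k σ l)) = ∑ l, g ν l * (G l k μ - dv k l * t μ - V l * dt k μ - (∑ σ, H l σ * dg k σ μ) + (∑ c, (∑ σ, g σ μ * G σ k c) * H c l) - (∑ c, G l k c * V c) * t μ) :=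
      Finset.sum_congr rfl fun l _ => by rw [hX k μ l]
    rw [e1, e2]
    have p4 := hP4 k μ
    have d4 := hD4 ν
    have d50 := hD5 0 ν
    have d51 := hD5 1 ν
    have d52 := hD5 2 ν
    have d53 := hD5 3 ν
    have kq1 := ksum (fun s => dg k s μ) ν
    have kq2 := ksum (fun c => ∑ σ, g σ μ * G σ k c) ν
    simp only [Fin.sum_univ_four, hDv] at p4 d4 d50 d51 d52 d53 kq1 kq2 ⊢
    linear_combination (G 0 k μ - (H 0 0 * dg k 0 μ + H 1 0 * dg k 1 μ + H 2 0 * dg k 2 μ + H 3 0 * dg k 3 μ) + ((g 0 μ * G 0 k 0 + g 1 μ * G 1 k 0 + g 2 μ * G 2 k 0 + g 3 μ * G 3 k 0) * H 0 0 + (g 0 μ * G 0 k 1 + g 1 μ * G 1 k 1 + g 2 μ * G 2 k 1 + g 3 μ * G 3 k 1) * H 1 0 + (g 0 μ * G 0 k 2 + g 1 μ * G 1 k 2 + g 2 μ * G 2 k 2 + g 3 μ * G 3 k 2) * H 2 0 + (g 0 μ * G 0 k 3 + g 1 μ * G 1 k 3 + g 2 μ * G 2 k 3 + g 3 μ * G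 3 k 3) * H 3 0)) * hg ν 0 + (G 1 k μ - (H 0 1 * dg k 0 μ + H 1 1 * dg k 1 μ + H 2 1 * dg k 2 μ + H 3 1 * dg k 3 μ) + ((g 0 μ * G 0 k 0 + g 1 μ * G 1 k 0 + g 2 μ * G 2 k 0 + g 3 μ * G 3 k 0) * H 0 1 + (g 0 μ * G 0 k 1 + g 1 μ * G 1 k 1 + g 2 μ * G 2 k 1 + g 3 μ * G 3 k 1) * H 1 1 + (g 0 μ * G 0 k 2 + g 1 μ * G 1 k 2 + g 2 μ * G 2 k 2 + g 3 μ * G 3 k 2) * H 2 1 + (g 0 μ * G 0 k 3 + g 1 μ * G 1 k 3 + g 2 μ * G 2 k 3 + g 3 μ * G 3 k 3) * H 3 1)) * hg ν 1 + (G 2 k μ - (H 0 2 * dg k 0 μ + H 1 2 * dg k 1 μ + H 2 2 * dg k 2 μ + H 3 2 * dg k 3 μ) + ((g 0 μ * G 0 k 0 + g 1 μ * G 1 k 0 + g 2 μ * G 2 k 0 + g 3 μ * G 3 k 0) * H 0 2 + (g 0 μ * G 0 k 1 + g 1 μ * G 1 k 1 + g 2 μ * G 2 k 1 + g 3 μ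 * G 3 k 1) * H 1 2 + (g 0 μ * G 0 k 2 + g 1 μ * G 1 k 2 + g 2 μ * G 2 k 2 + g 3 μ * G 3 k 2) * H 2 2 + (g 0 μ * G 0 k 3 + g 1 μ * G 1 k 3 + g 2 μ * G 2 k 3 + g 3 μ * G 3 k 3) * H 3 2)) * hg ν 2 + (G 3 k μ - (H 0 3 * dg k 0 μ + H 1 3 * dg k 1 μ + H 2 3 * dg k 2 μ + H 3 3 * dg k 3 μ) + ((g 0 μ * G 0 k 0 + g 1 μ * G 1 k 0 + g 2 μ * G 2 k 0 + g 3 μ * G 3 k 0) * H 0 3 + (g 0 μ * G 0 k 1 + g 1 μ * G 1 k 1 + g 2 μ * G 2 k 1 + g 3 μ * G 3 k 1) * H 1 3 + (g 0 μ * G 0 k 2 + g 1 μ * G 1 k 2 + g 2 μ * G 2 k 2 + g 3 μ * G 3 k 2) * H 2 3 + (g 0 μ * G 0 k 3 + g 1 μ * G 1 k 3 + g 2 μ * G 2 k 3 + g 3 μ * G 3 k 3) * H 3 3)) * hg ν 3 + (-(dt k μ)) * d4 - g ν 0 * dg k 0 μ * hH 0 0 - g ν 0 * dg k 1 μ * hH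 0 1 - g ν 0 * dg k 2 μ * hH 0 2 - g ν 0 * dg k 3 μ * hH 0 3 - g ν 1 * dg k 0 μ * hH 1 0 - g ν 1 * dg k 1 μ * hH 1 1 - g ν 1 * dg k 2 μ * hH 1 2 - g ν 1 * dg k 3 μ * hH 1 3 - g ν 2 * dg k 0 μ * hH 2 0 - g ν 2 * dg k 1 μ * hH 2 1 - g ν 2 * dg k 2 μ * hH 2 2 - g ν 2 * dg k 3 μ * hH 2 3 - g ν 3 * dg k 0 μ * hH 3 0 - g ν 3 * dg k 1 μ * hH 3 1 - g ν 3 * dg k 2 μ * hH 3 2 - g ν 3 * dg k 3 μ * hH 3 3 - dg k 0 μ * d50 - dg k 1 μ * d51 - dg k 2 μ * d52 - dg k 3 μ * d53 - kq1 - hdg k ν μ + V 0 * t ν * hdg k 0 μ + V 1 * t ν * hdg k 1 μ + V 2 * t ν * hdg k 2 μ + V 3 * t ν * hdg k 3 μ + t ν * p4 + (g 0 μ * G 0 k 0 + g 1 μ * G 1 k 0 + g 2 μ * G 2 k 0 + g 3 μ * G 3 k 0) * d50 + (g 0 μ * G 0 k 1 + g 1 μ * G 1 k 1 + g 2 μ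 * G 2 k 1 + g 3 μ * G 3 k 1) * d51 + (g 0 μ * G 0 k 2 + g 1 μ * G 1 k 2 + g 2 μ * G 2 k 2 + g 3 μ * G 3 k 2) * d52 + (g 0 μ * G 0 k 3 + g 1 μ * G 1 k 3 + g 2 μ * G 2 k 3 + g 3 μ * G 3 k 3) * d53 + kq2 + (G 0 k 0 * V 0 + G 0 k 1 * V 1 + G 0 k 2 * V 2 + G 0 k 3 * V 3) * t ν * hg μ 0 + (G 1 k 0 * V 0 + G 1 k 1 * V 1 + G 1 k 2 * V 2 + G 1 k 3 * V 3) * t ν * hg μ 1 + (G 2 k 0 * V 0 + G 2 k 1 * V 1 + G 2 k 2 * V 2 + G 2 k 3 * V 3) * t ν * hg μ 2 + (G 3 k 0 * V 0 + G 3 k 1 * V 1 + G 3 k 2 * V 2 + G 3 k 3 * V 3) * t ν * hg μ 3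
  have hTA : (∑ β, ∑ l, H α β * g β l * ((1/2) * ((∑ σ, g σ ν * Dh μ σ l) + (∑ σ, g σ μ * Dh ν σ l))))
      = ((1/2) * ((∑ σ, g σ ν * Dh μ σ α) + (∑ σ, g σ μ * Dh ν σ α)))
        - V α * ((1/2) * ((∑ σ, G σ μ ν * t σ) - (∑ l, t l * Dv μ l) * t ν - dt μ ν)
               + (1/2) * ((∑ σ, G σ ν μ * t σ) - (∑ l, t l * Dv ν l) * t μ - dt ν μ)) := by
    have x1 := hXt μ ν
    have x2 := hXt ν μ
    have d50 := hD5 α 0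
    have d51 := hD5 α 1
    have d52 := hD5 α 2
    have d53 := hD5 α 3
    have kq := ksum' (fun l => (1/2) * ((∑ σ, g σ ν * Dh μ σ l) + (∑ σ, g σ μ * Dh ν σ l))) α
    simp only [Fin.sum_univ_four] at x1 x2 d50 d51 d52 d53 kq ⊢
    linear_combination kq + (-(V α) * (1/2)) * x1 + (-(V α) * (1/2)) * x2 + ((1/2) * ((g 0 ν * Dh μ 0 0 + g 1 ν * Dh μ 1 0 + g 2 ν * Dh μ 2 0 + g 3 ν * Dh μ 3 0) + (g 0 μ * Dh ν 0 0 + g 1 μ * Dh ν 1 0 + g 2 μ * Dh ν 2 0 + g 3 μ * Dh ν 3 0))) * d50 + ((1/2) * ((g 0 ν * Dh μ 0 1 + g 1 ν * Dh μ 1 1 + g 2 ν * Dh μ 2 1 + g 3 ν * Dh μ 3 1) + (g 0 μ * Dh ν 0 1 + g 1 μ * Dh ν 1 1 + g 2 μ * Dh ν 2 1 + g 3 μ * Dh ν 3 1))) * d51 + ((1/2) * ((g 0 ν * Dh μ 0 2 + g 1 ν * Dh μ 1 2 + g 2 ν * Dh μ 2 2 + g 3 ν * Dh μ 3 2) + (g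 0 μ * Dh ν 0 2 + g 1 μ * Dh ν 1 2 + g 2 μ * Dh ν 2 2 + g 3 μ * Dh ν 3 2))) * d52 + ((1/2) * ((g 0 ν * Dh μ 0 3 + g 1 ν * Dh μ 1 3 + g 2 ν * Dh μ 2 3 + g 3 ν * Dh μ 3 3) + (g 0 μ * Dh ν 0 3 + g 1 μ * Dh ν 1 3 + g 2 μ * Dh ν 2 3 + g 3 μ * Dh ν 3 3))) * d53
  have hTB : (∑ k, ∑ σ, ∑ l, H α k * g μ σ * g ν l * Dh k σ l)
      = ∑ k, H α k * ((∑ σ, g σ ν * G σ k μ) + (∑ σ, g σ μ * G σ k ν) - dg k μ ν - (∑ a, g ν a * Dv k a) * t μ - (∑ a, g μ a * Dv k a) * t ν) := by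
    refine Finset.sum_congr rfl fun k _ => ?_
    rw [← hY k, Finset.mul_sum]
    refine Finset.sum_congr rfl fun σ _ => ?_
    rw [Finset.mul_sum]
    exact Finset.sum_congr rfl fun l _ => by ring
  have hTF : (∑ β, (t μ * ((1/2) * (∑ a, g β a * Dv ν a - ∑ a, g ν a * Dv β a)) + t ν * ((1/2) * (∑ a, g β a * Dv μ a - ∑ a, g μ a * Dv β a))) * H α β)
      = t μ * ((1/2) * (Dv ν α - V α * (∑ a, t a * Dv ν a) - ∑ b, H α b * (∑ a, g ν a * Dv b a)))
      + t ν * ((1/2) * (Dv μ α - V α * (∑ a, t a * Dv μ a) - ∑ b, H α b * (∑ a, g μ a * Dv b a))) := by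
    have d50 := hD5 α 0
    have d51 := hD5 α 1
    have d52 := hD5 α 2
    have d53 := hD5 α 3
    have kq1 := ksum' (fun a => Dv ν a) α
    have kq2 := ksum' (fun a => Dv μ a) α
    simp only [Fin.sum_univ_four] at d50 d51 d52 d53 kq1 kq2 ⊢
    linear_combination (1/2) * t μ * kq1 + (1/2) * t ν * kq2 + ((1/2) * (t μ * Dv ν 0 + t ν * Dv μ 0)) * d50 + ((1/2) * (t μ * Dv ν 1 + t ν * Dv μ 1)) * d51 + ((1/2) * (t μ * Dv ν 2 + t ν * Dv μ 2)) * d52 + ((1/2) * (t μ * Dv ν 3 + t ν * Dv μ 3)) * d53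
  rw [hTA, hTB, hTF, hX μ ν α, hX ν μ α]
  simp only [Fin.sum_univ_four, hDv]
  linear_combination -(1/2) * (H α 0 * (hdg μ ν 0 + hdg ν μ 0) + H α 1 * (hdg μ ν 1 + hdg ν μ 1) + H α 2 * (hdg μ ν 2 + hdg ν μ 2) + H α 3 * (hdg μ ν 3 + hdg ν μ 3)) - (1/2) * (((g 0 μ * G 0 0 ν + g 1 μ * G 1 0 ν + g 2 μ * G 2 0 ν + g 3 μ * G 3 0 ν) + (g 0 ν * G 0 0 μ + g 1 ν * G 1 0 μ + g 2 ν * G 2 0 μ + g 3 ν * G 3 0 μ)) * hH 0 α + ((g 0 μ * G 0 1 ν + g 1 μ * G 1 1 ν + g 2 μ * G 2 1 ν + g 3 μ * G 3 1 ν) + (g 0 ν * G 0 1 μ + g 1 ν * G 1 1 μ + g 2 ν * G 2 1 μ + g 3 ν * G 3 1 μ)) * hH 1 α + ((g 0 μ * G 0 2 ν + g 1 μ * G 1 2 ν + g 2 μ * G 2 2 ν + g 3 μ * G 3 2 ν) + (g 0 ν * G 0 2 μ + g 1 ν * G 1 2 μ + g 2 ν * G 2 2 μ + g 3 ν * G 3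 2 μ)) * hH 2 α + ((g 0 μ * G 0 3 ν + g 1 μ * G 1 3 ν + g 2 μ * G 2 3 ν + g 3 μ * G 3 3 ν) + (g 0 ν * G 0 3 μ + g 1 ν * G 1 3 μ + g 2 ν * G 2 3 μ + g 3 ν * G 3 3 μ)) * hH 3 α)

/-- Decomposition of a general affine connection with respect to a Galilean structure
(Schwartz): `Γ^α_{μν} − ^{v,τ}Γ^α_{μν} = h^α{}_β Q̂_{(μν)}{}^β − (1/2) Q̂^α{}_{μν}
− v^α Q̂_{(μν)} − T_{(μν)}{}^α + (1/2) T^α_{μν} + 2 τ_{(μ} κ_{ν)β} h^{αβ}`, written out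
with all indices raised/lowered explicitly by `h` and `γ`. -/
theorem galilean_decomposition
    (U : Set Vec4) (hU : IsOpen U) (hne : U.Nonempty)
    (τ v : Tens1) (γ h : Tens2) (Γ : Tens3)
    (hτs : Smooth1 τ U) (hvs : Smooth1 v U) (hγs : Smooth2 γ U) (hhs : Smooth2 h U)
    (hΓs : Smooth3 Γ U)
    (hdual : DualityOn τ v γ h U) :
    ∀ x ∈ U, ∀ α μ ν,
      Γ x α μ ν - compatConn v τ γ h x α μ ν
        = (∑ β, ∑ l, h x α β * γ x β l *
            ((1/2) * ((∑ σ, γ x σ ν * covUp Γ h x μ σ l)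
              + (∑ σ, γ x σ μ * covUp Γ h x ν σ l))))
          - (1/2) * ∑ κ, ∑ σ, ∑ l, h x α κ * γ x μ σ * γ x ν l * covUp Γ h x κ σ l
          - (1/2) * v x α * (covOne Γ τ x μ ν + covOne Γ τ x ν μ)
          - (1/2) * ∑ κ, (∑ σ, (γ x σ μ * torsion Γ x σ ν κ
              + γ x σ ν * torsion Γ x σ μ κ)) * h x κ α
          + (1/2) * torsion Γ x α μ ν
          + ∑ β, (τ x μ * coriolis Γ v γ x ν β + τ x ν * coriolis Γ v γ x μ β) * h x α β := by
  intro x hx α μ ν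
  obtain ⟨hγsym, hhsym, hτv, hhτ, hγv, hhγ⟩ := hdual x hx
  have hmem : U ∈ nhds x := hU.mem_nhds hx
  have dγ : ∀ a b, DifferentiableAt ℝ (fun y => γ y a b) x := fun a b =>
    ((hγs a b).differentiableOn (by simp)).differentiableAt hmem
  have dh' : ∀ a b, DifferentiableAt ℝ (fun y => h y a b) x := fun a b =>
    ((hhs a b).differentiableOn (by simp)).differentiableAt hmem
  have dτ : ∀ a, DifferentiableAt ℝ (fun y => τ y a) x := fun a =>
    ((hτs a).differentiableOn (by simp)).differentiableAt hmem
  have dv' : ∀ a, DifferentiableAt ℝ (fun y => v y a) x := fun a =>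
    ((hvs a).differentiableOn (by simp)).differentiableAt hmem
  have hdgsym : ∀ m a b, pd m (fun y => γ y a b) x = pd m (fun y => γ y b a) x := fun m a b =>
    pd_congr hU hx (fun y hy => (hdual y hy).1 a b) m
  have hdhsym : ∀ m a b, pd m (fun y => h y a b) x = pd m (fun y => h y b a) x := fun m a b =>
    pd_congr hU hx (fun y hy => (hdual y hy).2.1 a b) m
  have cP4 : ∀ m a, (∑ σ, (pd m (fun y => γ y a σ) x * v x σ + γ x a σ * pd m (fun y => v y σ) x)) = 0 := by
    intro m a
    have h0 : pd m (fun y => ∑ σ, γ y a σ * v y σ) x = 0 :=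
      pd_locally_const hU hx (fun y hy => (hdual y hy).2.2.2.2.1 a) m
    have e2 : pd m (fun y => ∑ σ, γ y a σ * v y σ) x = ∑ σ, pd m (fun y => γ y a σ * v y σ) x :=
      pd_sum m (fun σ y => γ y a σ * v y σ) x (fun σ => (dγ a σ).mul (dv' σ))
    have e3 : ∀ σ : Fin 4, pd m (fun y => γ y a σ * v y σ) x
        = pd m (fun y => γ y a σ) x * v x σ + γ x a σ * pd m (fun y => v y σ) x :=
      fun σ => pd_mul m _ _ x (dγ a σ) (dv' σ)
    rw [e2] at h0
    simp only [e3] at h0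
    exact h0
  have cP5 : ∀ m a b, (∑ σ, (pd m (fun y => h y a σ) x * γ x σ b + h x a σ * pd m (fun y => γ y σ b) x))
      = -(pd m (fun y => v y a) x * τ x b + v x a * pd m (fun y => τ y b) x) := by
    intro m a b
    have h0 : pd m (fun y => (∑ σ, h y a σ * γ y σ b) + v y a * τ y b) x = 0 :=
      pd_locally_const hU hx (fun y hy => by rw [(hdual y hy).2.2.2.2.2 a b]; ring) m
    have hs : DifferentiableAt ℝ (fun y => ∑ σ, h y a σ * γ y σ b) x := by
      apply DifferentiableAt.fun_sum
      intro i _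
      exact (dh' a i).mul (dγ i b)
    have e1 : pd m (fun y => (∑ σ, h y a σ * γ y σ b) + v y a * τ y b) x
        = pd m (fun y => ∑ σ, h y a σ * γ y σ b) x + pd m (fun y => v y a * τ y b) x :=
      pd_add m _ _ x hs ((dv' a).mul (dτ b))
    have e2 : pd m (fun y => ∑ σ, h y a σ * γ y σ b) x = ∑ σ, pd m (fun y => h y a σ * γ y σ b) x :=
      pd_sum m (fun σ y => h y a σ * γ y σ b) x (fun σ => (dh' a σ).mul (dγ σ b))
    have e3 : pd m (fun y => v y a * τ y b) x
        = pd m (fun y => v y a) x * τ x b + v x a * pd m (fun y => τ y b) x :=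
      pd_mul m _ _ x (dv' a) (dτ b)
    have e4 : ∀ σ : Fin 4, pd m (fun y => h y a σ * γ y σ b) x
        = pd m (fun y => h y a σ) x * γ x σ b + h x a σ * pd m (fun y => γ y σ b) x :=
      fun σ => pd_mul m _ _ x (dh' a σ) (dγ σ b)
    rw [e1, e2, e3] at h0
    simp only [e4] at h0
    linarith [h0]
  exact core_decomp (fun c a b => Γ x c a b) (fun a b => γ x a b) (fun a b => h x a b)
    (fun a => τ x a) (fun a => v x a)
    (fun m a b => pd m (fun y => γ y a b) x) (fun m a b => pd m (fun y => h y a b) x)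
    (fun m a => pd m (fun y => τ y a) x) (fun m a => pd m (fun y => v y a) x)
    (fun m a b => covUp Γ h x m a b) (fun m a => covVec Γ v x m a)
    (fun m a b => rfl) (fun m a => rfl)
    hγsym hhsym hdgsym hdhsym hτv hhτ hγv hhγ cP4 cP5 α μ ν
end

section
/- (Metric Carrollian case: reduced torsion and contorsion decomposition.) Assume the duality relations hold on U and that the connection is metric with respect to the Carrollian structure: ∇_μ v^ν = 0 and ∇_α γ_{μν} = 0 at every point. Define the Carrollian reduced torsion Ť^α_{μν} := T^α_{μν} − τ_μ Θ_{νσ} h^{σα} + τ_ν Θ_{μσ} h^{σα}. Then at every point of U: (i) v^α (γ_{μσ} Ť^σ_{να} + γ_{νσ} Ť^σ_{μα}) = 0 for all μ, ν; and (ii) Γ^α_{μν} − ^{v,τ}Γ^α_{μν} = −(1/2)(γ_{σμ} Ť^σ_{νκ} + γ_{σν} Ť^σ_{μκ}) h^{κα} + (1/2) Ť^α_{μν} − τ_ν Θ_{μσ} h^{σα} − (1/2) v^α (∇_μ τ_ν + ∇_ν τ_μ). -/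
/-- Carrollian reduced torsion Ť^α_{μν} := T^α_{μν} − 2 τ_{[μ} Θ_{ν]σ} h^{σα}. -/
noncomputable def carReducedTorsion (Γ : Tens3) (v τ : Tens1) (γ h : Tens2)
    (x : Vec4) (α μ ν : Fin 4) : ℝ :=
  torsion Γ x α μ ν - τ x μ * ∑ σ, theta2 v γ x ν σ * h x σ α
    + τ x ν * ∑ σ, theta2 v γ x μ σ * h x σ α

/-- Carrollian contorsion Ǩ^α_{μν} := −Ť_{(μν)}{}^α + (1/2) Ť^α_{μν}, indices moved by γ, h. -/
noncomputable def carContorsion (Γ : Tens3) (v τ : Tens1) (γ h : Tens2)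
    (x : Vec4) (α μ ν : Fin 4) : ℝ :=
  -(1/2) * ∑ κ, (∑ σ, (γ x σ μ * carReducedTorsion Γ v τ γ h x σ ν κ
      + γ x σ ν * carReducedTorsion Γ v τ γ h x σ μ κ)) * h x κ α
  + (1/2) * carReducedTorsion Γ v τ γ h x α μ ν

/-- Auxiliary: torsion contracted with `v` on the last index. -/
noncomputable def redt (Γ : Tens3) (v : Tens1) (x : Vec4) (σ μ : Fin 4) : ℝ :=
  ∑ κ, torsion Γ x σ μ κ * v x κ

set_option maxHeartbeats 1000000 in
/-- Metric Carrollian case: the reduced torsion satisfies `v^α Ť_{(μν)α} = 0` and the connection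
decomposes as `Γ − ^{v,τ}Γ = Ǩ^α_{μν} − τ_ν Θ_{μσ} h^{σα} − v^α χ_{μν}`. -/
theorem metric_carrollian_contorsion_decomposition
    (U : Set Vec4) (hU : IsOpen U) (hne : U.Nonempty)
    (τ v : Tens1) (γ h : Tens2) (Γ : Tens3)
    (hτs : Smooth1 τ U) (hvs : Smooth1 v U) (hγs : Smooth2 γ U) (hhs : Smooth2 h U)
    (hΓs : Smooth3 Γ U)
    (hdual : DualityOn τ v γ h U)
    (hmetv : ∀ x ∈ U, ∀ μ ν, covVec Γ v x μ ν = 0)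
    (hmetγ : ∀ x ∈ U, ∀ α μ ν, covLow Γ γ x α μ ν = 0) :
    ∀ x ∈ U,
      (∀ μ ν, ∑ α, v x α * ((∑ σ, γ x μ σ * carReducedTorsion Γ v τ γ h x σ ν α)
          + (∑ σ, γ x ν σ * carReducedTorsion Γ v τ γ h x σ μ α)) = 0) ∧
      (∀ α μ ν,
        Γ x α μ ν - compatConn v τ γ h x α μ ν
          = carContorsion Γ v τ γ h x α μ ν
            - τ x ν * ∑ σ, theta2 v γ x μ σ * h x σ α
            - (1/2) * v x α * (covOne Γ τ x μ ν + covOne Γ τ x ν μ)) := by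
  intro x hx
  obtain ⟨hγsym, hhsym, hτv, hhτ, hγv, hhγ⟩ := hdual x hx
  -- derivatives from metricity
  have hdv : ∀ μ ν, pd μ (fun y => v y ν) x = -∑ σ, Γ x ν μ σ * v x σ := by
    intro μ ν
    have h0 := hmetv x hx μ ν
    unfold covVec at h0
    linarith
  have hdγ : ∀ α μ ν, pd α (fun y => γ y μ ν) x
      = ∑ σ, Γ x σ α μ * γ x σ ν + ∑ σ, Γ x σ α ν * γ x μ σ := by
    intro α μ ν
    have h0 := hmetγ x hx α μ ν
    unfold covLow at h0
    linarith
  have hdγ2 : ∀ α μ ν, pd α (fun y => γ y μ ν) x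
      = ∑ σ, Γ x σ α μ * γ x σ ν + ∑ σ, Γ x σ α ν * γ x σ μ := by
    intro α μ ν
    rw [hdγ α μ ν]
    have e : ∑ σ, Γ x σ α ν * γ x μ σ = ∑ σ, Γ x σ α ν * γ x σ μ :=
      Finset.sum_congr rfl (fun σ _ => by rw [hγsym μ σ])
    rw [e]
  -- duality variants
  have hτh : ∀ α, ∑ κ, τ x κ * h x κ α = 0 := by
    intro α
    have e : ∑ κ, τ x κ * h x κ α = ∑ κ, h x α κ * τ x κ :=
      Finset.sum_congr rfl (fun κ _ => by rw [hhsym κ α]; ring)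
    rw [e]; exact hhτ α
  have hhγ2 : ∀ α κ, ∑ σ, h x α σ * γ x κ σ = kron α κ - v x α * τ x κ := by
    intro α κ
    have e : ∑ σ, h x α σ * γ x κ σ = ∑ σ, h x α σ * γ x σ κ :=
      Finset.sum_congr rfl (fun σ _ => by rw [hγsym κ σ])
    rw [e]; exact hhγ α κ
  have hγh : ∀ μ l, ∑ σ, γ x μ σ * h x l σ = kron l μ - v x l * τ x μ := by
    intro μ l
    have e : ∑ σ, γ x μ σ * h x l σ = ∑ σ, h x l σ * γ x σ μ :=
      Finset.sum_congr rfl (fun σ _ => by rw [hγsym μ σ]; ring)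
    rw [e]; exact hhγ l μ
  have hkron2 : ∀ (f : Fin 4 → ℝ) (α : Fin 4), ∑ l, f l * kron l α = f α := by
    intro f α
    unfold kron
    simp
  have hkron : ∀ (f : Fin 4 → ℝ) (α : Fin 4), ∑ l, f l * kron α l = f α := by
    intro f α
    unfold kron
    simp
  have esplit : ∀ (f : Fin 4 → ℝ) (c : ℝ) (α : Fin 4),
      ∑ l, f l * (kron l α - v x l * c) = f α - (∑ l, f l * v x l) * c := by
    intro f c α
    have e : ∑ l, f l * (kron l α - v x l * c)
        = (∑ l, f l * kron l α) - (∑ l, f l * v x l) * c := by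
      simp only [Fin.sum_univ_four]; ring
    rw [e, hkron2 f α]
  have esplitA : ∀ (f : Fin 4 → ℝ) (α : Fin 4),
      ∑ κ, f κ * (kron α κ - v x α * τ x κ) = f α - v x α * (∑ κ, f κ * τ x κ) := by
    intro f α
    have e : ∑ κ, f κ * (kron α κ - v x α * τ x κ)
        = (∑ κ, f κ * kron α κ) - v x α * (∑ κ, f κ * τ x κ) := by
      simp only [Fin.sum_univ_four]; ring
    rw [e, hkron f α]
  -- reduced torsion contracted with v, and the theta2 formula
  have ht0 : ∀ σ, ∑ κ, redt Γ v x σ κ * v x κ = 0 := by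
    intro σ
    unfold redt torsion
    simp only [Fin.sum_univ_four]
    ring
  have hΘ : ∀ μ ν, theta2 v γ x μ ν
      = -(1/2) * ((∑ σ, redt Γ v x σ μ * γ x σ ν) + (∑ σ, redt Γ v x σ ν * γ x μ σ)) := by
    intro μ ν
    unfold theta2 redt torsion
    simp only [hdv, hdγ, Fin.sum_univ_four]
    ring
  have hΘsym : ∀ μ ν, theta2 v γ x ν μ = theta2 v γ x μ ν := by
    intro μ ν
    rw [hΘ ν μ, hΘ μ ν]
    have e1 : ∑ σ, redt Γ v x σ μ * γ x ν σ = ∑ σ, redt Γ v x σ μ * γ x σ ν :=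
      Finset.sum_congr rfl (fun σ _ => by rw [hγsym ν σ])
    have e2 : ∑ σ, redt Γ v x σ ν * γ x μ σ = ∑ σ, redt Γ v x σ ν * γ x σ μ :=
      Finset.sum_congr rfl (fun σ _ => by rw [hγsym μ σ])
    linarith
  have hΘv : ∀ μ, ∑ κ, theta2 v γ x μ κ * v x κ = 0 := by
    intro μ
    have e : ∑ κ, theta2 v γ x μ κ * v x κ
        = -(1/2) * ((∑ σ, redt Γ v x σ μ * (∑ κ, γ x σ κ * v x κ))
          + (∑ σ, γ x μ σ * (∑ κ, redt Γ v x σ κ * v x κ))) := by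
      simp only [hΘ, Fin.sum_univ_four]; ring
    rw [e]
    simp only [hγv, ht0, mul_zero, Finset.sum_const_zero]
    ring
  have hΘv1 : ∀ μ, ∑ κ, theta2 v γ x κ μ * v x κ = 0 := by
    intro μ
    have e : ∑ κ, theta2 v γ x κ μ * v x κ = ∑ κ, theta2 v γ x μ κ * v x κ :=
      Finset.sum_congr rfl (fun κ _ => by rw [hΘsym μ κ])
    rw [e]; exact hΘv μ
  constructor
  · -- part (i)
    intro μ ν
    have e1 : ∑ α, v x α * ((∑ σ, γ x μ σ * carReducedTorsion Γ v τ γ h x σ ν α)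
          + (∑ σ, γ x ν σ * carReducedTorsion Γ v τ γ h x σ μ α))
        = (∑ σ, γ x μ σ * redt Γ v x σ ν) + (∑ σ, γ x ν σ * redt Γ v x σ μ)
          - τ x ν * (∑ l, (∑ α, theta2 v γ x α l * v x α) * (∑ σ, γ x μ σ * h x l σ))
          - τ x μ * (∑ l, (∑ α, theta2 v γ x α l * v x α) * (∑ σ, γ x ν σ * h x l σ))
          + (∑ α, τ x α * v x α) * (∑ l, theta2 v γ x ν l * (∑ σ, γ x μ σ * h x l σ))
          + (∑ α, τ x α * v x α) * (∑ l, theta2 v γ x μ l * (∑ σ, γ x ν σ * h x l σ)) := by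
      unfold carReducedTorsion redt torsion
      generalize theta2 v γ x = F
      simp only [Fin.sum_univ_four]
      ring
    rw [e1]
    simp only [hΘv1, hγh, hτv, zero_mul, mul_zero, Finset.sum_const_zero, sub_zero, one_mul]
    rw [esplit (fun l => theta2 v γ x ν l) (τ x μ) μ,
        esplit (fun l => theta2 v γ x μ l) (τ x ν) ν]
    simp only [hΘv, zero_mul, sub_zero]
    have final : (∑ σ, γ x μ σ * redt Γ v x σ ν) + (∑ σ, γ x ν σ * redt Γ v x σ μ)
        + theta2 v γ x ν μ + theta2 v γ x μ ν = 0 := by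
      rw [hΘ ν μ, hΘ μ ν]
      have sA : ∑ σ, γ x μ σ * redt Γ v x σ ν = ∑ σ, redt Γ v x σ ν * γ x σ μ :=
        Finset.sum_congr rfl (fun σ _ => by rw [hγsym μ σ]; ring)
      have sB : ∑ σ, γ x ν σ * redt Γ v x σ μ = ∑ σ, redt Γ v x σ μ * γ x σ ν :=
        Finset.sum_congr rfl (fun σ _ => by rw [hγsym ν σ]; ring)
      have sC : ∑ σ, redt Γ v x σ μ * γ x ν σ = ∑ σ, redt Γ v x σ μ * γ x σ ν :=
        Finset.sum_congr rfl (fun σ _ => by rw [hγsym ν σ])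
      have sD : ∑ σ, redt Γ v x σ ν * γ x μ σ = ∑ σ, redt Γ v x σ ν * γ x σ μ :=
        Finset.sum_congr rfl (fun σ _ => by rw [hγsym μ σ])
      linarith
    linarith [final]
  · -- part (ii)
    have hgT : ∀ μ ν κ, ∑ σ, γ x σ μ * carReducedTorsion Γ v τ γ h x σ ν κ
        = (∑ σ, γ x σ μ * torsion Γ x σ ν κ)
          - τ x ν * theta2 v γ x κ μ + τ x κ * theta2 v γ x ν μ := by
      intro m n k
      have e1 : ∑ σ, γ x σ m * carReducedTorsion Γ v τ γ h x σ n k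
          = (∑ σ, γ x σ m * torsion Γ x σ n k)
            - τ x n * (∑ l, theta2 v γ x k l * (∑ σ, h x l σ * γ x σ m))
            + τ x k * (∑ l, theta2 v γ x n l * (∑ σ, h x l σ * γ x σ m)) := by
        unfold carReducedTorsion
        generalize theta2 v γ x = F
        generalize torsion Γ x = T
        simp only [Fin.sum_univ_four]
        ring
      rw [e1]
      simp only [hhγ]
      rw [esplit (fun l => theta2 v γ x k l) (τ x m) m,
          esplit (fun l => theta2 v γ x n l) (τ x m) m]
      simp only [hΘv, zero_mul, sub_zero]
    intro α μ ν
    have hcc : compatConn v τ γ h x α μ ν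
        = (1/2)*(Γ x α μ ν + Γ x α ν μ)
          - (1/2) * v x α * (∑ κ, (Γ x κ μ ν + Γ x κ ν μ) * τ x κ)
          + (1/2)*(∑ σ, h x α σ * (∑ κ, torsion Γ x κ μ σ * γ x κ ν))
          + (1/2)*(∑ σ, h x α σ * (∑ κ, torsion Γ x κ ν σ * γ x κ μ))
          + (1/2)* v x α * (pd μ (fun y => τ y ν) x + pd ν (fun y => τ y μ) x) := by
      have e1 : compatConn v τ γ h x α μ ν
          = (1/2)*(∑ κ, (Γ x κ μ ν + Γ x κ ν μ) * (∑ σ, h x α σ * γ x κ σ))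
            + (1/2)*(∑ σ, h x α σ * (∑ κ, torsion Γ x κ μ σ * γ x κ ν))
            + (1/2)*(∑ σ, h x α σ * (∑ κ, torsion Γ x κ ν σ * γ x κ μ))
            + (1/2)* v x α * (pd μ (fun y => τ y ν) x + pd ν (fun y => τ y μ) x) := by
        unfold compatConn torsion
        simp only [hdγ2]
        simp only [Fin.sum_univ_four]
        ring
      rw [e1]
      simp only [hhγ2]
      rw [esplitA (fun κ => Γ x κ μ ν + Γ x κ ν μ) α]
      ring
    have hK : carContorsion Γ v τ γ h x α μ ν
        = -(1/2)*(∑ κ, (∑ σ, γ x σ μ * torsion Γ x σ ν κ) * h x κ α)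
          - (1/2)*(∑ κ, (∑ σ, γ x σ ν * torsion Γ x σ μ κ) * h x κ α)
          + (1/2)* τ x ν * (∑ κ, theta2 v γ x μ κ * h x κ α)
          + (1/2)* τ x μ * (∑ κ, theta2 v γ x ν κ * h x κ α)
          + (1/2)* carReducedTorsion Γ v τ γ h x α μ ν := by
      unfold carContorsion
      rw [show (∑ κ, (∑ σ, (γ x σ μ * carReducedTorsion Γ v τ γ h x σ ν κ
            + γ x σ ν * carReducedTorsion Γ v τ γ h x σ μ κ)) * h x κ α)
          = ∑ κ, ((((∑ σ, γ x σ μ * torsion Γ x σ ν κ) - τ x ν * theta2 v γ x μ κ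
              + τ x κ * theta2 v γ x ν μ)
             + ((∑ σ, γ x σ ν * torsion Γ x σ μ κ) - τ x μ * theta2 v γ x ν κ
              + τ x κ * theta2 v γ x μ ν)) * h x κ α)
        from Finset.sum_congr rfl (fun κ _ => by
          rw [Finset.sum_add_distrib, hgT μ ν κ, hgT ν μ κ, hΘsym μ κ, hΘsym ν κ])]
      have e2 : ∑ κ, ((((∑ σ, γ x σ μ * torsion Γ x σ ν κ) - τ x ν * theta2 v γ x μ κ
              + τ x κ * theta2 v γ x ν μ)
             + ((∑ σ, γ x σ ν * torsion Γ x σ μ κ) - τ x μ * theta2 v γ x ν κ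
              + τ x κ * theta2 v γ x μ ν)) * h x κ α)
          = (∑ κ, (∑ σ, γ x σ μ * torsion Γ x σ ν κ) * h x κ α)
            + (∑ κ, (∑ σ, γ x σ ν * torsion Γ x σ μ κ) * h x κ α)
            - τ x ν * (∑ κ, theta2 v γ x μ κ * h x κ α)
            - τ x μ * (∑ κ, theta2 v γ x ν κ * h x κ α)
            + (theta2 v γ x ν μ + theta2 v γ x μ ν) * (∑ κ, τ x κ * h x κ α) := by
        generalize theta2 v γ x = F
        generalize torsion Γ x = T
        simp only [Fin.sum_univ_four]
        ring
      rw [e2, hτh α]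
      ring
    have e4 : ∀ μ' ν', ∑ σ, h x α σ * (∑ κ, torsion Γ x κ μ' σ * γ x κ ν')
        = ∑ κ, (∑ σ, γ x σ ν' * torsion Γ x σ μ' κ) * h x κ α := by
      intro m n
      have e5 : ∑ σ, h x α σ * (∑ κ, torsion Γ x κ m σ * γ x κ n)
          = ∑ σ, h x σ α * (∑ κ, torsion Γ x κ m σ * γ x κ n) :=
        Finset.sum_congr rfl (fun s _ => by rw [hhsym α s])
      rw [e5]
      generalize torsion Γ x = T
      simp only [Fin.sum_univ_four]
      ring
    rw [hcc, hK, e4 μ ν, e4 ν μ]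
    unfold carReducedTorsion covOne torsion
    generalize theta2 v γ x = F
    simp only [Fin.sum_univ_four]
    ring
end
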